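/- arXiv:1108.0781 — 3 statements merged into one kernel-verified Lean document; each statement's English description precedes it below -/
import Mathlib

section
/- For every element x of the group ring Z/2Z[Q8], x⁴ equals the sum of the coefficients of x times the identity; that is, writing x = Σ_{g ∈ Q8} α_g · g with α_g ∈ Z/2Z, one has x⁴ = (Σ_g α_g) · 1. -/
/-!
Let `z` be the central element of order two of `Q₈`, let `A = k[Q₈]` over a ring `k` of
characteristic two, and let `ε = 1 - z`. Then `ε` is central with `ε² = 1 - z² = 0`, so every
element of the ideal `A ε` squares to zero. Since all commutators and squares of `Q₈` lie in
`{1, z}` and `z ≡ 1` modulo `ε`, the quotient `A / A ε` is commutative and there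
`x² ≡ ∑ α_g² g² ≡ (∑ α_g)²`. Writing `x² = (∑ α_g)² + n` with `n ∈ A ε` gives
`x⁴ = (∑ α_g)⁴ + n² = (∑ α_g)⁴`, which over `𝔽₂` is `∑ α_g`.
-/

open MonoidAlgebra

theorem sq_eq_zero_of_mem_span_singleton {R : Type*} [Semiring R] {e a : R}
    (he : ∀ b, Commute e b) (he2 : e ^ 2 = 0) (ha : a ∈ Ideal.span {e}) : a ^ 2 = 0 := by
  obtain ⟨b, rfl⟩ := Ideal.mem_span_singleton'.1 ha
  rw [(he b).symm.mul_pow, he2, mul_zero]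

section

variable {G : Type*} [Group G] {z : G}

theorem mul_self_eq_one_of_forall_mul_self (hsq : ∀ g : G, g * g = 1 ∨ g * g = z) :
    z * z = 1 := by
  rcases hsq z with h | h
  · exact h
  · rw [mul_eq_left.1 h, one_mul]

theorem commute_of_forall_mul_comm_eq (hcomm : ∀ g h : G, h * g = g * h ∨ h * g = g * h * z)
    (g : G) : Commute z g := by
  rcases hcomm z g with h | h
  · exact h.symm
  · rw [mul_eq_right.1 (mul_right_cancel h).symm]
    exact Commute.one_left g

end

namespace MonoidAlgebra

instance charP {k M : Type*} [Semiring k] [Monoid M] (p : ℕ) [CharP k p] : CharP k[M] p :=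
  charP_of_injective_ringHom (f := singleOneRingHom) single_right_injective p

variable {k G : Type*} [CommRing k] [Group G] {z : G}

theorem commute_one_sub_single (hz : ∀ g, Commute z g) (x : k[G]) :
    Commute (1 - single z 1) x :=
  (Commute.one_left x).sub_left (single_commute hz (fun _ ↦ .all _ _) x)

theorem sq_one_sub_single_eq_zero [CharP k 2] (hz2 : z * z = 1) :
    (1 - single z (1 : k)) ^ 2 = 0 := by
  rw [sub_pow_char_of_commute 2 (Commute.one_left _), one_pow, sq, single_mul_single, hz2,
    mul_one, ← one_def, sub_self]

theorem mul_sub_mul_mem_span_one_sub_single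
    (hcomm : ∀ g h : G, h * g = g * h ∨ h * g = g * h * z) (u v : k[G]) :
    u * v - v * u ∈ Ideal.span {1 - single z 1} := by
  induction u using induction_linear with
  | zero => simp
  | add u₁ u₂ h₁ h₂ => simpa [add_mul, mul_add, add_sub_add_comm] using add_mem h₁ h₂
  | single g r =>
    induction v using induction_linear with
    | zero => simp
    | add v₁ v₂ h₁ h₂ => simpa [add_mul, mul_add, add_sub_add_comm] using add_mem h₁ h₂
    | single h s =>
      rw [single_mul_single, single_mul_single, mul_comm s]
      rcases hcomm g h with hgh | hgh
      · rw [hgh, sub_self]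
        exact zero_mem _
      · have hfactor : single (g * h) (r * s) - single (g * h * z) (r * s) =
            single (g * h) (r * s) * (1 - single z 1) := by
          rw [mul_sub, mul_one, single_mul_single, mul_one]
        rw [hgh, hfactor]
        exact Ideal.mul_mem_left _ _ (Ideal.mem_span_singleton_self _)

theorem sq_sub_sum_coeff_sq_smul_one_mem_span [Fintype G] [CharP k 2]
    (hcomm : ∀ g h : G, h * g = g * h ∨ h * g = g * h * z) (hsq : ∀ g : G, g * g = 1 ∨ g * g = z)
    (y : k[G]) : y ^ 2 - (∑ g, y.coeff g) ^ 2 • 1 ∈ Ideal.span {1 - single z 1} := by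
  induction y using induction_linear with
  | zero => simp
  | add f g hf hg =>
    have hsum : ∑ x, (f + g).coeff x = ∑ x, f.coeff x + ∑ x, g.coeff x := by
      simp [coeff_add, Finset.sum_add_distrib]
    convert add_mem (add_mem hf hg) (mul_sub_mul_mem_span_one_sub_single hcomm f g) using 1
    rw [hsum, add_pow_char, add_smul, sq f, sq g, sq (f + g), add_mul, mul_add, mul_add]
    simp only [CharTwo.sub_eq_add]
    abel
  | single g r =>
    have hsum : ∑ h, (single g r).coeff h = r := by simp [coeff_single]
    have hone : r ^ 2 • (1 : k[G]) = single 1 (r ^ 2) := by rw [one_def, smul_single', mul_one]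
    rw [hsum, hone, sq (single g r), single_mul_single, ← sq r]
    rcases hsq g with hg | hg
    · rw [hg, sub_self]
      exact zero_mem _
    · have hfactor :
          single z (r ^ 2) - single 1 (r ^ 2) = -(single 1 (r ^ 2) * (1 - single z 1)) := by
        rw [mul_sub, mul_one, single_mul_single, one_mul, mul_one, neg_sub]
      rw [hg, hfactor]
      exact neg_mem (Ideal.mul_mem_left _ _ (Ideal.mem_span_singleton_self _))

theorem pow_four_eq_sum_coeff_pow_four_smul_one [Fintype G] [CharP k 2]
    (hcomm : ∀ g h : G, h * g = g * h ∨ h * g = g * h * z) (hsq : ∀ g : G, g * g = 1 ∨ g * g = z)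
    (x : k[G]) : x ^ 4 = (∑ g, x.coeff g) ^ 4 • 1 := by
  set c := (∑ g, x.coeff g) ^ 2
  set n := x ^ 2 - c • 1
  have hn : n ^ 2 = 0 :=
    sq_eq_zero_of_mem_span_singleton
      (commute_one_sub_single (commute_of_forall_mul_comm_eq hcomm))
      (sq_one_sub_single_eq_zero (mul_self_eq_one_of_forall_mul_self hsq))
      (sq_sub_sum_coeff_sq_smul_one_mem_span hcomm hsq x)
  calc x ^ 4 = (c • 1 + n) ^ 2 := by rw [add_sub_cancel, ← pow_mul]
    _ = (c • 1) ^ 2 + n ^ 2 := add_pow_char_of_commute 2 ((Commute.one_left n).smul_left c)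
    _ = (∑ g, x.coeff g) ^ 4 • 1 := by rw [hn, add_zero, smul_pow, one_pow, ← pow_mul]

end MonoidAlgebra

theorem z2_q8_fourth_power_eq_coeff_sum
    (x : MonoidAlgebra (ZMod 2) (QuaternionGroup 2)) :
    x ^ 4 = (∑ g : QuaternionGroup 2, x.coeff g) •
      (1 : MonoidAlgebra (ZMod 2) (QuaternionGroup 2)) := by
  have hcomm : ∀ g h : QuaternionGroup 2, h * g = g * h ∨ h * g = g * h * .a 2 := by decide
  have hsq : ∀ g : QuaternionGroup 2, g * g = 1 ∨ g * g = .a 2 := by decide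
  rw [pow_four_eq_sum_coeff_pow_four_smul_one hcomm hsq x, (by decide : ∀ t : ZMod 2, t ^ 4 = t)]
end

section
/- Let G be a group, H a subgroup, K an associative ring with 1, and let T be a set of representatives for the left cosets of H in G. Then the family of elements {u·(h - 1) : u ∈ T, h ∈ H, h ≠ 1} of the group ring K[G] is linearly independent over K. -/
/-!
In `K[G]` we have `u * (h - 1) = e_{u h} - e_u`. Because `T` is a left transversal, the elements
`u h` with `h ≠ 1` are pairwise distinct and none of them lies in `T`, so reading off the
coordinates at the points `u h` sends the family to the standard basis of `K^(T × (H ∖ 1))`.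
-/

theorem Module.Basis.linearIndependent_sub {R M α ι : Type*} [Ring R] [AddCommGroup M]
    [Module R M] (b : Module.Basis α R M) {a c : ι → α} (ha : Function.Injective a)
    (hac : ∀ i j, c i ≠ a j) : LinearIndependent R fun i => b (a i) - b (c i) := by
  refine LinearIndependent.of_comp (Finsupp.lcomapDomain a ha ∘ₗ b.repr.toLinearMap) ?_
  convert Finsupp.linearIndependent_single_one R ι with i
  ext j
  simp [Finsupp.single_apply_left ha, hac]

theorem Subgroup.IsComplement.mul_ne_of_ne_one {G : Type*} [Group G] {T : Set G}
    {H : Subgroup G} (hTH : Subgroup.IsComplement T H) {u u' : T} {h : H} (hh : h ≠ 1) :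
    (u : G) * h ≠ u' := by
  intro heq
  have := hTH.1 (a₁ := (u, h)) (a₂ := (u', 1)) (by simpa using heq)
  exact hh (by simpa using congrArg Prod.snd this)

/-- The elements `u * (h - 1)` for `u` in a left transversal `T` of `H` and
`1 ≠ h ∈ H` are linearly independent over `K` in the group ring `K[G]`. -/
theorem transversal_family_linearIndependent
    (G : Type*) [Group G] (H : Subgroup G) (K : Type*) [Ring K]
    (T : Set G) (hT : ∀ g : G, ∃! u, u ∈ T ∧ u⁻¹ * g ∈ H) :
    LinearIndependent K
      (fun p : T × {h : H // h ≠ 1} =>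
        MonoidAlgebra.of K G (p.1 : G) *
          (MonoidAlgebra.of K G ((p.2 : H) : G) - 1)) := by
  have hTH : Subgroup.IsComplement T H :=
    Subgroup.isComplement_iff_existsUnique_inv_mul_mem.2 fun g => by
      obtain ⟨u, hu, huniq⟩ := hT g
      exact ⟨⟨u, hu.1⟩, hu.2, fun v hv => Subtype.ext (huniq v ⟨v.2, hv⟩)⟩
  have hsub := (MonoidAlgebra.basis G K).linearIndependent_sub
    (a := fun p : T × {h : H // h ≠ 1} => (p.1 : G) * (p.2 : H)) (c := fun p => p.1)
    (hTH.1.comp (Function.injective_id.prodMap Subtype.val_injective))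
    (fun p q => (hTH.mul_ne_of_ne_one q.2.2).symm)
  simpa [mul_sub, MonoidAlgebra.single_mul_single, MonoidAlgebra.one_def] using hsub
end

section
/- The two-element set {0, σ}, where σ = Σ_{g ∈ Q8} g is the sum of all eight group elements, is a two-sided ideal of the group ring Z/2Z[Q8], and it is the smallest nonzero ideal: it is contained in every nonzero two-sided ideal of Z/2Z[Q8]. -/
/-!
The vectors of `k[G]` fixed by left multiplication with every `g ∈ G` are exactly the multiples of
`σ = ∑ g`, and `gσ = σg = σ` makes `k ∙ σ` a two-sided ideal. If `G` is a `p`-group and `k` a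
finite field of characteristic `p`, then `G` acts by left multiplication on a nonzero left ideal
`I`, whose cardinality is divisible by `p`; so the number of fixed points in `I` is divisible by
`p` too, and besides `0` there is a nonzero fixed vector `cσ ∈ I`, whence `σ ∈ I`.
Over `ZMod 2` the span of `σ` is `{0, σ}`, and `Q8` has order `8`.
-/

open MonoidAlgebra

namespace MonoidAlgebra

section CommSemiring

variable (k G : Type*) [CommSemiring k] [Group G] [Fintype G]

noncomputable def normElement : k[G] := ∑ g : G, of k G g

variable {k G}

theorem coeff_normElement (g : G) : (normElement k G).coeff g = 1 := by
  simp [normElement, of_apply, coeff_single]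

theorem normElement_ne_zero [Nontrivial k] : normElement k G ≠ 0 := fun h ↦ by
  simpa [h] using coeff_normElement (k := k) (1 : G)

theorem of_mul_normElement (g : G) : of k G g * normElement k G = normElement k G := by
  simp only [normElement, Finset.mul_sum, ← map_mul]
  exact Fintype.sum_equiv (Equiv.mulLeft g) _ _ fun _ ↦ rfl

theorem normElement_mul_of (g : G) : normElement k G * of k G g = normElement k G := by
  simp only [normElement, Finset.sum_mul, ← map_mul]
  exact Fintype.sum_equiv (Equiv.mulRight g) _ _ fun _ ↦ rfl

theorem mul_normElement_mem_span (r : k[G]) : r * normElement k G ∈ k ∙ normElement k G := by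
  induction r using MonoidAlgebra.induction_on with
  | of g => rw [of_mul_normElement]; exact Submodule.mem_span_singleton_self _
  | add x y hx hy => rw [add_mul]; exact add_mem hx hy
  | smul c x hx => rw [smul_mul_assoc]; exact Submodule.smul_mem _ c hx

theorem normElement_mul_mem_span (r : k[G]) : normElement k G * r ∈ k ∙ normElement k G := by
  induction r using MonoidAlgebra.induction_on with
  | of g => rw [normElement_mul_of]; exact Submodule.mem_span_singleton_self _
  | add x y hx hy => rw [mul_add]; exact add_mem hx hy
  | smul c x hx => rw [mul_smul_comm]; exact Submodule.smul_mem _ c hx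

theorem mul_mem_span_normElement (r : k[G]) {x : k[G]} (hx : x ∈ k ∙ normElement k G) :
    r * x ∈ k ∙ normElement k G := by
  obtain ⟨c, rfl⟩ := Submodule.mem_span_singleton.mp hx
  rw [mul_smul_comm]
  exact Submodule.smul_mem _ c (mul_normElement_mem_span r)

theorem mem_span_normElement_mul (r : k[G]) {x : k[G]} (hx : x ∈ k ∙ normElement k G) :
    x * r ∈ k ∙ normElement k G := by
  obtain ⟨c, rfl⟩ := Submodule.mem_span_singleton.mp hx
  rw [smul_mul_assoc]
  exact Submodule.smul_mem _ c (normElement_mul_mem_span r)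

theorem eq_coeff_one_smul_normElement {x : k[G]} (hx : ∀ g, of k G g * x = x) :
    x = x.coeff 1 • normElement k G := by
  ext g
  have := congr_arg (fun y ↦ y.coeff g) (hx g)
  simp only [of_apply, coeff_single_mul_apply, one_mul, inv_mul_cancel] at this
  rw [coeff_smul, Finsupp.smul_apply, coeff_normElement, smul_eq_mul, mul_one, this]

end CommSemiring

theorem normElement_mem_of_ne_bot {k G : Type*} [Field k] [Finite k] [Group G] [Fintype G]
    {p : ℕ} [Fact p.Prime] [CharP k p] (hG : IsPGroup p G) {I : Ideal k[G]} (hI : I ≠ ⊥) :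
    normElement k G ∈ I := by
  let : MulAction G I := MulAction.compHom I (of k G)
  have : Finite k[G] := Module.finite_of_finite k
  obtain ⟨x, hxI, hx0⟩ := Submodule.exists_mem_ne_zero_of_ne_bot hI
  have hp : p ∣ Nat.card I := by
    have : addOrderOf (⟨x, hxI⟩ : I) = p := by
      refine addOrderOf_eq_prime (Subtype.ext ?_) (by simpa using hx0)
      simp [← Nat.cast_smul_eq_nsmul k]
    exact this ▸ addOrderOf_dvd_natCard _
  obtain ⟨⟨y, hyI⟩, hy, hy0⟩ :=
    hG.exists_fixed_point_of_prime_dvd_card_of_fixed_point I hp (a := 0)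
      fun g ↦ Subtype.ext (mul_zero (of k G g))
  obtain ⟨c, rfl⟩ : ∃ c : k, y = c • normElement k G :=
    ⟨_, eq_coeff_one_smul_normElement fun g ↦ congr_arg Subtype.val (hy g)⟩
  have hc : c ≠ 0 := by
    rintro rfl
    exact hy0 (Subtype.ext (zero_smul k _).symm)
  rw [← inv_smul_smul₀ hc (normElement k G)]
  exact Submodule.smul_of_tower_mem _ _ hyI

end MonoidAlgebra

theorem ZMod.coe_span_singleton_two {M : Type*} [AddCommMonoid M] [Module (ZMod 2) M] (x : M) :
    ((ZMod 2 ∙ x : Submodule (ZMod 2) M) : Set M) = {0, x} := by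
  ext y
  simp only [SetLike.mem_coe, Submodule.mem_span_singleton, Set.mem_insert_iff,
    Set.mem_singleton_iff]
  constructor
  · rintro ⟨a, rfl⟩
    fin_cases a
    exacts [Or.inl (zero_smul _ x), Or.inr (one_smul _ x)]
  · rintro (rfl | rfl)
    exacts [⟨0, zero_smul _ _⟩, ⟨1, one_smul _ _⟩]

theorem quaternionGroup_two_isPGroup : IsPGroup 2 (QuaternionGroup 2) :=
  IsPGroup.of_card (n := 3) (by rw [Nat.card_eq_fintype_card, QuaternionGroup.card]; rfl)

/-- `{0, σ}` with `σ = Σ_{g ∈ Q8} g` is a two-sided ideal of `(ZMod 2)[Q8]`,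
contained in every nonzero two-sided ideal. -/
theorem z2_q8_smallest_ideal :
    let σ : MonoidAlgebra (ZMod 2) (QuaternionGroup 2) :=
      ∑ g : QuaternionGroup 2, MonoidAlgebra.of (ZMod 2) (QuaternionGroup 2) g
    let S : Set (MonoidAlgebra (ZMod 2) (QuaternionGroup 2)) := {0, σ}
    σ ≠ 0 ∧
    (∀ x ∈ S, ∀ y ∈ S, x + y ∈ S) ∧
    (∀ x ∈ S, ∀ r : MonoidAlgebra (ZMod 2) (QuaternionGroup 2), r * x ∈ S ∧ x * r ∈ S) ∧
    (∀ I : Ideal (MonoidAlgebra (ZMod 2) (QuaternionGroup 2)),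
      (∀ x ∈ I, ∀ r : MonoidAlgebra (ZMod 2) (QuaternionGroup 2), x * r ∈ I) →
      I ≠ ⊥ → S ⊆ I) := by
  intro σ S
  have hS : S = (ZMod 2 ∙ normElement (ZMod 2) (QuaternionGroup 2) : Submodule _ _) :=
    (ZMod.coe_span_singleton_two σ).symm
  refine ⟨normElement_ne_zero, ?_, ?_, fun I _ hI ↦ ?_⟩
  · rw [hS]
    exact fun x hx y hy ↦ add_mem hx hy
  · rw [hS]
    exact fun x hx r ↦ ⟨mul_mem_span_normElement r hx, mem_span_normElement_mul r hx⟩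
  · exact Set.pair_subset I.zero_mem (normElement_mem_of_ne_bot quaternionGroup_two_isPGroup hI)
end
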